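/- Let W be an N×N weight matrix on ℝ satisfying W(x) = W(−x) for almost every x, and let V(y) = y^{−1/2} W(√y) and U(y) = y^{1/2} W(√y) be the associated weight matrices on (0,∞). Let {Q_n}_{n≥0} be any sequence of orthogonal polynomials with respect to W. Then there exist N×N matrix polynomials P_n and R_n of degree n such that Q_{2n}(x) = P_n(x²) and Q_{2n+1}(x) = x · R_n(x²) for all n ≥ 0, and {P_n}_{n≥0} is a sequence of orthogonal polynomials with respect to V while {R_n}_{n≥0} is a sequence of orthogonal polynomials with respect to U. -/

import Mathlib

open MeasureTheory Polynomial Set Matrix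
open scoped ComplexOrder

noncomputable section

/-- Matrix polynomials: `N × N` matrices with entries in `ℂ[X]`. -/
abbrev MatPoly (N : ℕ) := Matrix (Fin N) (Fin N) (Polynomial ℂ)

/-- Evaluation of a matrix polynomial at a real point. -/
def evalM {N : ℕ} (P : MatPoly N) (x : ℝ) : Matrix (Fin N) (Fin N) ℂ :=
  fun i j => (P i j).eval (x : ℂ)

/-- The `k`-th matrix coefficient of a matrix polynomial. -/
def coeffM {N : ℕ} (P : MatPoly N) (k : ℕ) : Matrix (Fin N) (Fin N) ℂ :=
  fun i j => (P i j).coeff k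

/-- Entrywise derivative of a matrix polynomial. -/
def derivM {N : ℕ} (P : MatPoly N) : MatPoly N :=
  fun i j => Polynomial.derivative (P i j)

/-- Entrywise iterated derivative. -/
def iterDerivM {N : ℕ} (k : ℕ) (P : MatPoly N) : MatPoly N :=
  fun i j => (fun q => Polynomial.derivative q)^[k] (P i j)

/-- Constant matrix polynomial. -/
def constM {N : ℕ} (A : Matrix (Fin N) (Fin N) ℂ) : MatPoly N :=
  A.map Polynomial.C

/-- Entrywise multiplication by the scalar polynomial `X`. -/
def XmulM {N : ℕ} (P : MatPoly N) : MatPoly N :=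
  fun i j => Polynomial.X * P i j

/-- Composition with the polynomial `X ^ 2` (the substitution `x ↦ x²`). -/
def compSqM {N : ℕ} (P : MatPoly N) : MatPoly N :=
  fun i j => (P i j).comp (Polynomial.X ^ 2)

/-- Composition with `-X` (the substitution `x ↦ -x`). -/
def reflectM {N : ℕ} (P : MatPoly N) : MatPoly N :=
  fun i j => (P i j).comp (-Polynomial.X)

/-- Right action of the matrix differential operator `D = ∑_{j=0}^s (d^j/dx^j) F j`
on a matrix polynomial: `(P · D)(x) = ∑_{j=0}^s P^{(j)}(x) F_j(x)`. -/
def applyOp {N : ℕ} (s : ℕ) (F : ℕ → MatPoly N) (P : MatPoly N) : MatPoly N :=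
  ∑ j ∈ Finset.range (s + 1), iterDerivM j P * F j

/-- Entrywise integral of a matrix-valued function over a set. -/
def matInt {N : ℕ} (I : Set ℝ) (f : ℝ → Matrix (Fin N) (Fin N) ℂ) :
    Matrix (Fin N) (Fin N) ℂ :=
  fun i j => ∫ x in I, f x i j

/-- The matrix inner product `⟨P, Q⟩_W = ∫_I P(x) W(x) Q(x)^* dx`. -/
def innerW {N : ℕ} (I : Set ℝ) (W : ℝ → Matrix (Fin N) (Fin N) ℂ)
    (P Q : MatPoly N) : Matrix (Fin N) (Fin N) ℂ :=
  matInt I (fun x => evalM P x * W x * (evalM Q x)ᴴ)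

/-- `W` is a weight matrix on the set `I ⊆ ℝ`: integrable on `I`, positive definite
almost everywhere on `I`, and with all moments finite. -/
structure IsWeight {N : ℕ} (I : Set ℝ) (W : ℝ → Matrix (Fin N) (Fin N) ℂ) : Prop where
  integrable : ∀ i j, IntegrableOn (fun x => W x i j) I
  posdef : ∀ᵐ x ∂(volume.restrict I), (W x).PosDef
  moments : ∀ (n : ℕ) (i j), IntegrableOn (fun (x : ℝ) => (x : ℂ) ^ n * W x i j) I

/-- `P` is monic of degree exactly `n` (leading coefficient the identity matrix). -/
def IsMonicDeg {N : ℕ} (P : MatPoly N) (n : ℕ) : Prop :=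
  coeffM P n = 1 ∧ ∀ k, n < k → coeffM P k = 0

/-- `P` is the sequence of monic orthogonal polynomials of the weight `W` on `I`. -/
def MonicOPS {N : ℕ} (I : Set ℝ) (W : ℝ → Matrix (Fin N) (Fin N) ℂ)
    (P : ℕ → MatPoly N) : Prop :=
  (∀ n, IsMonicDeg (P n) n) ∧ ∀ n m, n ≠ m → innerW I W (P n) (P m) = 0

/-- A (not necessarily monic) sequence of orthogonal polynomials for `W` on `I`:
degree `n` with invertible leading coefficient, pairwise orthogonal. -/
def IsOPS {N : ℕ} (I : Set ℝ) (W : ℝ → Matrix (Fin N) (Fin N) ℂ)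
    (Q : ℕ → MatPoly N) : Prop :=
  (∀ n, IsUnit (coeffM (Q n) n) ∧ ∀ k, n < k → coeffM (Q n) k = 0) ∧
  ∀ n m, n ≠ m → innerW I W (Q n) (Q m) = 0

/-- The Laguerre-type weight `V(y) = y^{-1/2} W(√y)` on `(0,∞)`. -/
def VWeight {N : ℕ} (W : ℝ → Matrix (Fin N) (Fin N) ℂ) :
    ℝ → Matrix (Fin N) (Fin N) ℂ :=
  fun y => (Real.sqrt y)⁻¹ • W (Real.sqrt y)

/-- The Laguerre-type weight `U(y) = y^{1/2} W(√y)` on `(0,∞)`. -/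
def UWeight {N : ℕ} (W : ℝ → Matrix (Fin N) (Fin N) ℂ) :
    ℝ → Matrix (Fin N) (Fin N) ℂ :=
  fun y => Real.sqrt y • W (Real.sqrt y)

/-- `p` is the sequence of monic scalar orthogonal polynomials of the scalar
weight `w` on `I`. -/
def ScalarMonicOPS (I : Set ℝ) (w : ℝ → ℝ) (p : ℕ → Polynomial ℝ) : Prop :=
  (∀ n, (p n).Monic ∧ (p n).natDegree = n) ∧
  ∀ n m, n ≠ m → ∫ x in I, (p n).eval x * (p m).eval x * w x = 0


/-! Since `W` is even, the reflection `x ↦ -x` preserves `⟨·,·⟩_W`. Hence `Q_n(-x) - (-1)ⁿ Q_n(x)`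
has degree `< n` and is orthogonal to `Q_0, …, Q_{n-1}`, so it is orthogonal to itself and
vanishes by positive definiteness of `W`. Thus `Q_{2n}` is even and `Q_{2n+1}` is odd, which gives
`P_n` and `R_n`, and the substitution `y = x²` on `(0, ∞)` together with the evenness of the
integrands turns `⟨P_n, P_m⟩_V` into `⟨Q_{2n}, Q_{2m}⟩_W`. Since `U` is the weight `V` built from
`x² W(x)`, the same substitution turns `⟨R_n, R_m⟩_U` into `⟨Q_{2n+1}, Q_{2m+1}⟩_W`. -/

namespace Polynomial

variable {R : Type*}

theorem coeff_comp_neg_X [CommRing R] (p : R[X]) (k : ℕ) :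
    (p.comp (-X)).coeff k = (-1) ^ k * p.coeff k := by
  induction p using Polynomial.induction_on' with
  | add p q hp hq => simp [add_comp, hp, hq, mul_add]
  | monomial n a =>
    rw [← C_mul_X_pow_eq_monomial, mul_comp, C_comp, X_pow_comp, neg_pow, ← C_1, ← C_neg,
      ← C_pow, mul_left_comm, coeff_C_mul, coeff_C_mul, coeff_X_pow]
    split_ifs with h <;> simp [h]

theorem expand_contract_of_coeff_eq_zero [CommSemiring R] {p : ℕ} (hp : p ≠ 0) {f : R[X]}
    (hf : ∀ n, ¬p ∣ n → f.coeff n = 0) : expand R p (contract p f) = f := by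
  ext n
  rw [coeff_expand hp.bot_lt, coeff_contract hp]
  split_ifs with h
  · rw [Nat.div_mul_cancel h]
  · exact (hf n h).symm

theorem X_mul_expand_contract_divX [CommSemiring R] {p : ℕ} (hp : p ≠ 0) {f : R[X]}
    (hf₀ : f.coeff 0 = 0) (hf : ∀ n, ¬p ∣ n → f.coeff (n + 1) = 0) :
    X * expand R p (contract p f.divX) = f := by
  rw [expand_contract_of_coeff_eq_zero hp fun n hn => by rw [coeff_divX, hf n hn]]
  simpa [hf₀] using X_mul_divX_add f

theorem star_eval_ofReal (q : ℂ[X]) (x : ℝ) :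
    star (q.eval (x : ℂ)) = (q.map (starRingEnd ℂ)).eval (x : ℂ) := by
  rw [eval_map, ← Complex.conj_ofReal, eval₂_at_apply, Complex.conj_ofReal]
  rfl

theorem eq_zero_of_ae_eval_ofReal_eq_zero {p : ℂ[X]} {I : Set ℝ} (hI : volume I ≠ 0)
    (h : ∀ᵐ x : ℝ ∂volume.restrict I, p.eval (x : ℂ) = 0) : p = 0 := by
  by_contra hp
  have hroots : {x : ℝ | p.eval (x : ℂ) = 0}.Finite :=
    (p.finite_setOfPred_isRoot hp).preimage Complex.ofReal_injective.injOn
  have hne : ∀ᵐ x : ℝ ∂volume.restrict I, p.eval (x : ℂ) ≠ 0 :=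
    ae_restrict_of_ae (measure_eq_zero_iff_ae_notMem.mp (hroots.measure_zero volume))
  refine hI (Measure.restrict_eq_zero.mp (ae_eq_bot.mp ?_))
  exact Filter.eventually_false_iff_eq_bot.mp ((h.and hne).mono fun x hx => hx.2 hx.1)

end Polynomial

section MatPoly

variable {N : ℕ}

theorem coeffM_sub (P T : MatPoly N) (k : ℕ) :
    coeffM (P - T) k = coeffM P k - coeffM T k := by
  ext i j; simp [coeffM]

theorem coeffM_smul (c : ℂ) (P : MatPoly N) (k : ℕ) :
    coeffM (c • P) k = c • coeffM P k := by
  ext i j; simp [coeffM]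

theorem coeffM_constM_mul (A : Matrix (Fin N) (Fin N) ℂ) (P : MatPoly N) (k : ℕ) :
    coeffM (constM A * P) k = A * coeffM P k := by
  ext i j; simp [coeffM, constM, mul_apply]

theorem coeffM_reflectM (P : MatPoly N) (k : ℕ) :
    coeffM (reflectM P) k = (-1 : ℂ) ^ k • coeffM P k := by
  ext i j; simp [coeffM, reflectM, coeff_comp_neg_X]

theorem coeffM_map_contract (P : MatPoly N) (k : ℕ) :
    coeffM (P.map (contract 2)) k = coeffM P (k * 2) := by
  ext i j; simp [coeffM, coeff_contract two_ne_zero]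

theorem coeffM_map_contract_divX (P : MatPoly N) (k : ℕ) :
    coeffM (P.map (contract 2 ∘ divX)) k = coeffM P (k * 2 + 1) := by
  ext i j; simp [coeffM, coeff_contract two_ne_zero, coeff_divX]

theorem reflectM_reflectM (P : MatPoly N) : reflectM (reflectM P) = P := by
  funext i j; exact comp_neg_X_comp_neg_X _

theorem compSqM_map_contract {P : MatPoly N} (hP : ∀ k, ¬2 ∣ k → coeffM P k = 0) :
    compSqM (P.map (contract 2)) = P := by
  funext i j
  rw [compSqM, map_apply, ← expand_eq_comp_X_pow]
  exact expand_contract_of_coeff_eq_zero two_ne_zero fun k hk => congrFun₂ (hP k hk) i j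

theorem XmulM_compSqM_map_contract_divX {P : MatPoly N} (hP : ∀ k, 2 ∣ k → coeffM P k = 0) :
    XmulM (compSqM (P.map (contract 2 ∘ divX))) = P := by
  funext i j
  rw [XmulM, compSqM, map_apply, Function.comp_apply, ← expand_eq_comp_X_pow]
  refine X_mul_expand_contract_divX two_ne_zero (congrFun₂ (hP 0 (dvd_zero 2)) i j)
    fun k hk => congrFun₂ (hP (k + 1) ?_) i j
  omega

theorem evalM_sub (P T : MatPoly N) (x : ℝ) : evalM (P - T) x = evalM P x - evalM T x := by
  ext i j; simp [evalM]

theorem evalM_smul (c : ℂ) (P : MatPoly N) (x : ℝ) : evalM (c • P) x = c • evalM P x := by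
  ext i j; simp [evalM]

theorem evalM_sum {ι : Type*} (s : Finset ι) (P : ι → MatPoly N) (x : ℝ) :
    evalM (∑ a ∈ s, P a) x = ∑ a ∈ s, evalM (P a) x := by
  ext i j; simp [evalM, Matrix.sum_apply, eval_finsetSum]

theorem evalM_constM_mul (A : Matrix (Fin N) (Fin N) ℂ) (P : MatPoly N) (x : ℝ) :
    evalM (constM A * P) x = A * evalM P x := by
  ext i j; simp [evalM, constM, mul_apply, eval_finsetSum]

theorem evalM_reflectM (P : MatPoly N) (x : ℝ) : evalM (reflectM P) x = evalM P (-x) := by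
  ext i j; simp [evalM, reflectM, eval_comp]

theorem evalM_compSqM (P : MatPoly N) (x : ℝ) : evalM (compSqM P) x = evalM P (x ^ 2) := by
  ext i j; simp [evalM, compSqM, eval_comp]

theorem evalM_XmulM (P : MatPoly N) (x : ℝ) : evalM (XmulM P) x = (x : ℂ) • evalM P x := by
  ext i j; simp [evalM, XmulM]

end MatPoly

section InnerProduct

variable {N : ℕ} {I : Set ℝ} {W : ℝ → Matrix (Fin N) (Fin N) ℂ}

def HasMoments (I : Set ℝ) (W : ℝ → Matrix (Fin N) (Fin N) ℂ) : Prop :=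
  ∀ (n : ℕ) (i j : Fin N), IntegrableOn (fun x : ℝ => (x : ℂ) ^ n * W x i j) I

theorem IsWeight.hasMoments (hW : IsWeight I W) : HasMoments I W :=
  hW.moments

theorem IsWeight.ae_isHermitian (hW : IsWeight I W) :
    ∀ᵐ x ∂volume.restrict I, (W x).IsHermitian :=
  hW.posdef.mono fun _ hx => hx.isHermitian

theorem HasMoments.integrableOn_eval_mul (hW : HasMoments I W) (p : ℂ[X]) (i j : Fin N) :
    IntegrableOn (fun x : ℝ => p.eval (x : ℂ) * W x i j) I := by
  simp_rw [eval_eq_sum_range, Finset.sum_mul, mul_assoc]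
  exact integrable_finsetSum _ fun n _ => (hW n i j).const_mul _

theorem HasMoments.integrableOn_innerW_apply (hW : HasMoments I W) (P T : MatPoly N)
    (i j : Fin N) :
    IntegrableOn (fun x => (evalM P x * W x * (evalM T x)ᴴ) i j) I := by
  have hexpand : (fun x => (evalM P x * W x * (evalM T x)ᴴ) i j) = fun x : ℝ =>
      ∑ l, ∑ k, (P i k * (T j l).map (starRingEnd ℂ)).eval (x : ℂ) * W x k l := by
    funext x
    simp only [mul_apply, conjTranspose_apply, evalM, Finset.sum_mul, eval_mul,
      star_eval_ofReal]
    exact Finset.sum_congr rfl fun l _ => Finset.sum_congr rfl fun k _ => by ring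
  rw [hexpand]
  exact integrable_finsetSum _ fun l _ =>
    integrable_finsetSum _ fun k _ => hW.integrableOn_eval_mul _ k l

theorem innerW_sub_left (hW : HasMoments I W) (P T G : MatPoly N) :
    innerW I W (P - T) G = innerW I W P G - innerW I W T G := by
  ext i j
  simp only [innerW, matInt, Matrix.sub_apply, evalM_sub, Matrix.sub_mul]
  exact integral_sub (hW.integrableOn_innerW_apply P G i j)
    (hW.integrableOn_innerW_apply T G i j)

theorem innerW_smul_left (c : ℂ) (P G : MatPoly N) :
    innerW I W (c • P) G = c • innerW I W P G := by
  ext i j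
  simp only [innerW, matInt, evalM_smul, Matrix.smul_mul, Matrix.smul_apply, smul_eq_mul]
  exact integral_const_mul c _

theorem innerW_sum_left (hW : HasMoments I W) {ι : Type*} (s : Finset ι) (P : ι → MatPoly N)
    (G : MatPoly N) : innerW I W (∑ a ∈ s, P a) G = ∑ a ∈ s, innerW I W (P a) G := by
  ext i j
  simp only [innerW, matInt, evalM_sum, Finset.sum_mul, Matrix.sum_apply]
  exact integral_finsetSum s fun a _ => hW.integrableOn_innerW_apply (P a) G i j

theorem innerW_constM_mul_left (hW : HasMoments I W) (A : Matrix (Fin N) (Fin N) ℂ)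
    (P G : MatPoly N) : innerW I W (constM A * P) G = A * innerW I W P G := by
  ext i j
  have hrow : ∀ x, (A * evalM P x * W x * (evalM G x)ᴴ) i j
      = ∑ l, A i l * (evalM P x * W x * (evalM G x)ᴴ) l j := fun x => by
    simp only [Matrix.mul_assoc, mul_apply (M := A)]
  simp only [innerW, matInt, evalM_constM_mul, hrow, mul_apply (M := A)]
  rw [integral_finsetSum _ fun l _ => (hW.integrableOn_innerW_apply P G l j).const_mul _]
  simp only [integral_const_mul]

theorem innerW_conjTranspose (hherm : ∀ᵐ x ∂volume.restrict I, (W x).IsHermitian)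
    (P G : MatPoly N) : (innerW I W P G)ᴴ = innerW I W G P := by
  ext i j
  show starRingEnd ℂ (∫ x in I, (evalM P x * W x * (evalM G x)ᴴ) j i)
    = ∫ x in I, (evalM G x * W x * (evalM P x)ᴴ) i j
  rw [← integral_conj]
  refine integral_congr_ae (hherm.mono fun x hx => ?_)
  have hadj : (evalM P x * W x * (evalM G x)ᴴ)ᴴ = evalM G x * W x * (evalM P x)ᴴ := by
    simp only [conjTranspose_mul, conjTranspose_conjTranspose, hx.eq, Matrix.mul_assoc]
  exact congrFun₂ hadj i j

end InnerProduct

theorem Matrix.PosDef.mul_mul_conjTranspose_apply_self_pos {m n : Type*} [Fintype n]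
    {M : Matrix n n ℂ} (hM : M.PosDef) {A : Matrix m n ℂ} {i : m} (hA : A i ≠ 0) :
    0 < (A * M * Aᴴ) i i := by
  convert hM.dotProduct_mulVec_pos (star_ne_zero.mpr hA) using 1
  simp only [mul_apply, conjTranspose_apply, dotProduct, mulVec, Pi.star_apply, star_star,
    Finset.mul_sum, Finset.sum_mul]
  rw [Finset.sum_comm]
  exact Finset.sum_congr rfl fun _ _ => Finset.sum_congr rfl fun _ _ => by ring

theorem ae_eq_zero_of_integral_eq_zero_of_nonneg {α : Type*} [MeasurableSpace α]
    {μ : Measure α} {f : α → ℂ} (hf : Integrable f μ) (hnn : ∀ᵐ x ∂μ, 0 ≤ f x)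
    (h : ∫ x, f x ∂μ = 0) : ∀ᵐ x ∂μ, f x = 0 := by
  have hre : (fun x => (f x).re) =ᵐ[μ] 0 := by
    refine (integral_eq_zero_iff_of_nonneg_ae (hnn.mono fun x hx => ?_) hf.re).mp ?_
    · exact (Complex.le_def.mp hx).1
    · simpa [h] using integral_re hf
  filter_upwards [hre, hnn] with x hxre hxnn
  exact Complex.ext hxre (Complex.le_def.mp hxnn).2.symm

section OrthogonalPolynomials

variable {N : ℕ} {I : Set ℝ} {W : ℝ → Matrix (Fin N) (Fin N) ℂ} {Q : ℕ → MatPoly N}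

theorem eq_zero_of_innerW_self_eq_zero (hW : IsWeight I W) (hI : volume I ≠ 0) {S : MatPoly N}
    (h : innerW I W S S = 0) : S = 0 := by
  have hdiag : ∀ i, ∀ᵐ x ∂volume.restrict I, (evalM S x * W x * (evalM S x)ᴴ) i i = 0 :=
    fun i => ae_eq_zero_of_integral_eq_zero_of_nonneg
      (hW.hasMoments.integrableOn_innerW_apply S S i i)
      (hW.posdef.mono fun x hx => (hx.posSemidef.mul_mul_conjTranspose_same _).diag_nonneg)
      (congrFun₂ h i i)
  have hrow : ∀ i, ∀ᵐ x ∂volume.restrict I, evalM S x i = 0 := fun i =>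
    (hW.posdef.and (hdiag i)).mono fun x hx => by
      by_contra hne
      exact (hx.1.mul_mul_conjTranspose_apply_self_pos hne).ne' hx.2
  funext i k
  exact eq_zero_of_ae_eval_ofReal_eq_zero hI ((hrow i).mono fun x hx => congrFun hx k)

theorem exists_eq_sum_constM_mul
    (hQ : ∀ n, IsUnit (coeffM (Q n) n) ∧ ∀ k, n < k → coeffM (Q n) k = 0)
    {m : ℕ} {S : MatPoly N} (hS : ∀ k, m ≤ k → coeffM S k = 0) :
    ∃ A : ℕ → Matrix (Fin N) (Fin N) ℂ, S = ∑ j ∈ Finset.range m, constM (A j) * Q j := by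
  induction m generalizing S with
  | zero =>
    refine ⟨0, ?_⟩
    funext i j
    ext k
    simpa [coeffM] using congrFun₂ (hS k k.zero_le) i j
  | succ m ih =>
    obtain ⟨B, -, hB⟩ := isUnit_iff_exists.mp (hQ m).1
    obtain ⟨A, hA⟩ := ih (S := S - constM (coeffM S m * B) * Q m) fun k hk => by
      rw [coeffM_sub, coeffM_constM_mul]
      rcases hk.eq_or_lt with rfl | hlt
      · rw [Matrix.mul_assoc, hB, Matrix.mul_one, sub_self]
      · rw [hS k hlt, (hQ m).2 k hlt, Matrix.mul_zero, sub_zero]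
    refine ⟨Function.update A m (coeffM S m * B), ?_⟩
    rw [Finset.sum_range_succ, Function.update_self,
      Finset.sum_congr rfl fun j hj => by
        rw [Function.update_of_ne (Finset.mem_range.mp hj).ne], ← hA, sub_add_cancel]

theorem IsOPS.innerW_eq_zero_of_coeffM_eq_zero (hW : HasMoments I W) (hQ : IsOPS I W Q)
    {n : ℕ} {S : MatPoly N} (hS : ∀ k, n ≤ k → coeffM S k = 0) :
    innerW I W S (Q n) = 0 := by
  obtain ⟨A, rfl⟩ := exists_eq_sum_constM_mul hQ.1 hS
  rw [innerW_sum_left hW]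
  refine Finset.sum_eq_zero fun j hj => ?_
  rw [innerW_constM_mul_left hW, hQ.2 j n (Finset.mem_range.mp hj).ne, Matrix.mul_zero]

theorem IsOPS.eq_zero_of_forall_innerW_eq_zero (hW : IsWeight I W) (hI : volume I ≠ 0)
    (hQ : IsOPS I W Q) {n : ℕ} {S : MatPoly N} (hS : ∀ k, n ≤ k → coeffM S k = 0)
    (horth : ∀ j < n, innerW I W S (Q j) = 0) : S = 0 := by
  refine eq_zero_of_innerW_self_eq_zero hW hI ?_
  obtain ⟨A, hA⟩ := exists_eq_sum_constM_mul hQ.1 hS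
  nth_rewrite 1 [hA]
  rw [innerW_sum_left hW.hasMoments]
  refine Finset.sum_eq_zero fun j hj => ?_
  rw [innerW_constM_mul_left hW.hasMoments,
    ← innerW_conjTranspose hW.ae_isHermitian,
    horth j (Finset.mem_range.mp hj), conjTranspose_zero, Matrix.mul_zero]

end OrthogonalPolynomials

section Symmetric

variable {N : ℕ} {W : ℝ → Matrix (Fin N) (Fin N) ℂ} {Q : ℕ → MatPoly N}

theorem innerW_univ_reflectM (hsymm : ∀ᵐ x : ℝ, W x = W (-x)) (P T : MatPoly N) :
    innerW univ W (reflectM P) (reflectM T) = innerW univ W P T := by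
  ext i j
  simp only [innerW, matInt, Measure.restrict_univ]
  rw [← integral_neg_eq_self (fun x => (evalM P x * W x * (evalM T x)ᴴ) i j)]
  refine integral_congr_ae (hsymm.mono fun x hx => ?_)
  simp only [evalM_reflectM, hx]

theorem IsOPS.reflectM_eq (hW : IsWeight univ W) (hsymm : ∀ᵐ x : ℝ, W x = W (-x))
    (hQ : IsOPS univ W Q) (n : ℕ) : reflectM (Q n) = (-1 : ℂ) ^ n • Q n := by
  refine sub_eq_zero.mp (hQ.eq_zero_of_forall_innerW_eq_zero hW (by simp) (n := n) ?_ ?_)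
  · intro k hk
    rcases hk.eq_or_lt with rfl | hlt
    · rw [coeffM_sub, coeffM_reflectM, coeffM_smul, sub_self]
    · simp only [coeffM_sub, coeffM_reflectM, coeffM_smul, (hQ.1 n).2 k hlt, smul_zero,
        sub_self]
  · intro j hj
    have hlow : innerW univ W (reflectM (Q j)) (Q n) = 0 :=
      hQ.innerW_eq_zero_of_coeffM_eq_zero hW.hasMoments fun k hk => by
        rw [coeffM_reflectM, (hQ.1 j).2 k (by omega), smul_zero]
    rw [innerW_sub_left hW.hasMoments, innerW_smul_left, hQ.2 n j hj.ne', smul_zero, sub_zero,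
      ← reflectM_reflectM (Q j), innerW_univ_reflectM hsymm,
      ← innerW_conjTranspose hW.ae_isHermitian, hlow,
      conjTranspose_zero]

theorem IsOPS.coeffM_eq_zero_of_odd_add (hW : IsWeight univ W)
    (hsymm : ∀ᵐ x : ℝ, W x = W (-x)) (hQ : IsOPS univ W Q) {n k : ℕ} (hnk : Odd (n + k)) :
    coeffM (Q n) k = 0 := by
  have hc := congrArg (fun P => (-1 : ℂ) ^ n • coeffM P k) (hQ.reflectM_eq hW hsymm n)
  simp only [coeffM_reflectM, coeffM_smul, smul_smul, ← pow_add, hnk.neg_one_pow,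
    Even.neg_one_pow ⟨n, rfl⟩, neg_one_smul, one_smul] at hc
  ext i j
  exact neg_eq_self.mp (congrFun₂ hc i j)

end Symmetric

theorem integral_Ioi_inv_sqrt_smul_comp_sqrt {E : Type*} [NormedAddCommGroup E]
    [NormedSpace ℝ E] {f : ℝ → E} (hf : Integrable f) (heven : ∀ᵐ x, f (-x) = f x) :
    ∫ y in Ioi 0, (√y)⁻¹ • f √y = ∫ x, f x := by
  have himage : (fun x : ℝ => x ^ 2) '' Ioi 0 = Ioi 0 := by
    ext y
    constructor
    · rintro ⟨x, hx : 0 < x, rfl⟩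
      exact pow_pos hx 2
    · exact fun hy => ⟨√y, Real.sqrt_pos.mpr hy, Real.sq_sqrt (le_of_lt hy)⟩
  have hinj : InjOn (fun x : ℝ => x ^ 2) (Ioi 0) := fun a ha b hb hab =>
    (sq_eq_sq₀ (le_of_lt ha) (le_of_lt hb)).mp hab
  calc ∫ y in Ioi 0, (√y)⁻¹ • f √y
      = ∫ x in Ioi 0, |2 * x| • (√(x ^ 2))⁻¹ • f √(x ^ 2) := by
        conv_lhs => rw [← himage]
        exact integral_image_eq_integral_abs_deriv_smul measurableSet_Ioi
          (fun x _ => by simpa using (hasDerivAt_pow 2 x).hasDerivWithinAt) hinj _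
    _ = ∫ x in Ioi 0, (2 : ℝ) • f x := by
        refine setIntegral_congr_fun measurableSet_Ioi fun x (hx : 0 < x) => ?_
        rw [Real.sqrt_sq hx.le, smul_smul, abs_of_pos (by positivity), mul_assoc,
          mul_inv_cancel₀ hx.ne', mul_one]
    _ = (∫ x in Iic 0, f x) + ∫ x in Ioi 0, f x := by
        rw [integral_smul, two_smul, ← neg_zero, ← integral_comp_neg_Ioi, neg_zero]
        congr 1
        exact integral_congr_ae (ae_restrict_of_ae (heven.mono fun _ h => h.symm))
    _ = ∫ x, f x := intervalIntegral.integral_Iic_add_Ioi hf.integrableOn hf.integrableOn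

section LaguerreWeights

variable {N : ℕ} {W : ℝ → Matrix (Fin N) (Fin N) ℂ}

theorem innerW_VWeight (hW : HasMoments univ W) (hsymm : ∀ᵐ x : ℝ, W x = W (-x))
    (P T : MatPoly N) :
    innerW (Ioi 0) (VWeight W) P T = innerW univ W (compSqM P) (compSqM T) := by
  ext i j
  simp only [innerW, matInt, Measure.restrict_univ]
  rw [← integral_Ioi_inv_sqrt_smul_comp_sqrt
    (integrableOn_univ.mp (hW.integrableOn_innerW_apply _ _ i j))]
  · refine setIntegral_congr_fun measurableSet_Ioi fun y (hy : 0 < y) => ?_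
    simp only [VWeight, evalM_compSqM, Real.sq_sqrt hy.le, Matrix.mul_smul, Matrix.smul_mul,
      Matrix.smul_apply]
  · refine hsymm.mono fun x hx => ?_
    simp only [evalM_compSqM, neg_sq, ← hx]

-- Both sides vanish for `y ≤ 0`, where `√y = 0` and `0⁻¹ = 0`.
theorem UWeight_eq_VWeight_sq_smul : UWeight W = VWeight fun x => (x ^ 2) • W x := by
  funext y
  simp only [UWeight, VWeight, smul_smul]
  congr 1
  rcases eq_or_ne √y 0 with h | h
  · simp [h]
  · field_simp

theorem HasMoments.sq_smul {I : Set ℝ} (hW : HasMoments I W) :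
    HasMoments I fun x => (x ^ 2) • W x := fun n i j => by
  convert hW (n + 2) i j using 2 with x
  simp only [Matrix.smul_apply, Complex.real_smul]
  push_cast
  ring

theorem innerW_sq_smul (I : Set ℝ) (P T : MatPoly N) :
    innerW I (fun x => (x ^ 2) • W x) P T = innerW I W (XmulM P) (XmulM T) := by
  ext i j
  simp only [innerW, matInt, evalM_XmulM, conjTranspose_smul, Matrix.smul_mul,
    Matrix.mul_smul, Matrix.smul_apply, smul_smul, Complex.star_def, Complex.conj_ofReal]
  congr 1
  funext x
  simp only [Complex.real_smul, smul_eq_mul]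
  push_cast
  ring

theorem innerW_UWeight (hW : HasMoments univ W) (hsymm : ∀ᵐ x : ℝ, W x = W (-x))
    (P T : MatPoly N) :
    innerW (Ioi 0) (UWeight W) P T
      = innerW univ W (XmulM (compSqM P)) (XmulM (compSqM T)) := by
  rw [UWeight_eq_VWeight_sq_smul, innerW_VWeight hW.sq_smul
    (hsymm.mono fun x hx => by simp only [neg_sq, hx]), innerW_sq_smul]

end LaguerreWeights

section EvenOddParts

variable {N : ℕ} {W : ℝ → Matrix (Fin N) (Fin N) ℂ} {Q : ℕ → MatPoly N}

theorem IsOPS.compSqM_map_contract (hW : IsWeight univ W) (hsymm : ∀ᵐ x : ℝ, W x = W (-x))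
    (hQ : IsOPS univ W Q) (n : ℕ) : compSqM ((Q (2 * n)).map (contract 2)) = Q (2 * n) :=
  _root_.compSqM_map_contract fun k hk => hQ.coeffM_eq_zero_of_odd_add hW hsymm <| by
    rw [Nat.odd_add']
    exact ⟨fun _ => even_two_mul n, fun _ => Nat.odd_iff.mpr (Nat.two_dvd_ne_zero.mp hk)⟩

theorem IsOPS.XmulM_compSqM_map_contract_divX (hW : IsWeight univ W)
    (hsymm : ∀ᵐ x : ℝ, W x = W (-x)) (hQ : IsOPS univ W Q) (n : ℕ) :
    XmulM (compSqM ((Q (2 * n + 1)).map (contract 2 ∘ divX))) = Q (2 * n + 1) :=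
  _root_.XmulM_compSqM_map_contract_divX fun k hk => hQ.coeffM_eq_zero_of_odd_add hW hsymm <| by
    obtain ⟨m, rfl⟩ := hk
    exact ⟨n + m, by ring⟩

theorem IsOPS.isOPS_VWeight (hW : IsWeight univ W) (hsymm : ∀ᵐ x : ℝ, W x = W (-x))
    (hQ : IsOPS univ W Q) :
    IsOPS (Ioi 0) (VWeight W) fun n => (Q (2 * n)).map (contract 2) := by
  refine ⟨fun n => ?_, fun n m hnm => ?_⟩
  · simp only [coeffM_map_contract]
    exact ⟨mul_comm n 2 ▸ (hQ.1 (2 * n)).1, fun k hk => (hQ.1 (2 * n)).2 _ (by omega)⟩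
  · rw [innerW_VWeight hW.hasMoments hsymm, hQ.compSqM_map_contract hW hsymm,
      hQ.compSqM_map_contract hW hsymm]
    exact hQ.2 _ _ (by omega)

theorem IsOPS.isOPS_UWeight (hW : IsWeight univ W) (hsymm : ∀ᵐ x : ℝ, W x = W (-x))
    (hQ : IsOPS univ W Q) :
    IsOPS (Ioi 0) (UWeight W) fun n => (Q (2 * n + 1)).map (contract 2 ∘ divX) := by
  refine ⟨fun n => ?_, fun n m hnm => ?_⟩
  · simp only [coeffM_map_contract_divX]
    exact ⟨mul_comm n 2 ▸ (hQ.1 (2 * n + 1)).1, fun k hk => (hQ.1 (2 * n + 1)).2 _ (by omega)⟩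
  · rw [innerW_UWeight hW.hasMoments hsymm, hQ.XmulM_compSqM_map_contract_divX hW hsymm,
      hQ.XmulM_compSqM_map_contract_divX hW hsymm]
    exact hQ.2 _ _ (by omega)

end EvenOddParts

/-- If `W(x) = W(-x)` a.e. and `Q` is any sequence of orthogonal
polynomials for `W`, then there are matrix polynomials `P_n`, `R_n` (of degree `n`,
with invertible leading coefficient, as part of `IsOPS`) with `Q_{2n}(x) = P_n(x²)`
and `Q_{2n+1}(x) = x · R_n(x²)`, and `P`, `R` are sequences of orthogonal polynomials
for `V(y) = y^{-1/2} W(√y)` and `U(y) = y^{1/2} W(√y)` on `(0,∞)`, respectively. -/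
theorem stmt6 {N : ℕ} (W : ℝ → Matrix (Fin N) (Fin N) ℂ)
    (hW : IsWeight Set.univ W)
    (hsymm : ∀ᵐ x : ℝ, W x = W (-x))
    (Q : ℕ → MatPoly N) (hQ : IsOPS Set.univ W Q) :
    ∃ P R : ℕ → MatPoly N,
      (∀ n : ℕ, Q (2 * n) = compSqM (P n)) ∧
      (∀ n : ℕ, Q (2 * n + 1) = XmulM (compSqM (R n))) ∧
      IsOPS (Set.Ioi 0) (VWeight W) P ∧ IsOPS (Set.Ioi 0) (UWeight W) R :=
  ⟨_, _, fun n => (hQ.compSqM_map_contract hW hsymm n).symm,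
    fun n => (hQ.XmulM_compSqM_map_contract_divX hW hsymm n).symm,
    hQ.isOPS_VWeight hW hsymm, hQ.isOPS_UWeight hW hsymm⟩
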